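/- Separability consequence: if ρ is a separable bipartite state on H⊗H (dim H = d) and {E_{α,k}} is an informationally complete (N,M)-POVM with parameter x, then ‖P(ρ)‖_tr ≤ (d−1)(xM²+d²)/(dM(M−1)), where P(ρ) is the NM×NM matrix with entries tr(ρ(E_{α,k}⊗E_{β,l})). -/

import Mathlib

set_option maxHeartbeats 1000000


open Matrix Kronecker BigOperators
open scoped ComplexOrder

noncomputable def traceNorm {n : Type*} [Fintype n] [DecidableEq n] (A : Matrix n n ℂ) : ℝ :=
  ((Matrix.posSemidef_conjTranspose_mul_self (R := ℂ) A).1.eigenvectorUnitary.1 *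
    diagonal (((↑) : ℝ → ℂ) ∘ Real.sqrt ∘ (Matrix.posSemidef_conjTranspose_mul_self (R := ℂ) A).1.eigenvalues) *
    (star (Matrix.posSemidef_conjTranspose_mul_self (R := ℂ) A).1.eigenvectorUnitary :
      Matrix n n ℂ)).trace.re

/-- A symmetric `(N,M)`-POVM with parameter `x` on a `d`-dimensional Hilbert space. -/
def IsNMPOVM (d N M : ℕ) (x : ℝ) (E : Fin N → Fin M → Matrix (Fin d) (Fin d) ℂ) : Prop :=
  (∀ α k, (E α k).PosSemidef) ∧
  (∀ α, ∑ k, E α k = 1) ∧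
  (∀ α k, (E α k).trace = (d : ℂ) / (M : ℂ)) ∧
  (∀ α k, (E α k * E α k).trace = (x : ℂ)) ∧
  (∀ α k l, k ≠ l →
    (E α k * E α l).trace = ((d : ℂ) - (M : ℂ) * (x : ℂ)) / ((M : ℂ) * ((M : ℂ) - 1))) ∧
  (∀ α β k l, α ≠ β → (E α k * E β l).trace = (d : ℂ) / (M : ℂ) ^ 2)

/-- The swap (flip) operator `F` on `H ⊗ H`. -/
def swapOp (d : ℕ) : Matrix (Fin d × Fin d) (Fin d × Fin d) ℂ :=
  Matrix.of fun p q => if p.1 = q.2 ∧ p.2 = q.1 then 1 else 0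

noncomputable def Matrix.PosSemidef.sqrt {n : Type*} [Fintype n] [DecidableEq n] {A : Matrix n n ℂ}
    (hA : A.PosSemidef) : Matrix n n ℂ :=
  hA.1.eigenvectorUnitary.1 * diagonal (((↑) : ℝ → ℂ) ∘ Real.sqrt ∘ hA.1.eigenvalues) *
    (star hA.1.eigenvectorUnitary : Matrix n n ℂ)

lemma Matrix.PosSemidef.sqrt_mul_self {n : Type*} [Fintype n] [DecidableEq n] {A : Matrix n n ℂ}
    (hA : A.PosSemidef) : hA.sqrt * hA.sqrt = A := by
  have hU : (star hA.1.eigenvectorUnitary : Matrix n n ℂ) * hA.1.eigenvectorUnitary.1 = 1 :=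
    Unitary.coe_star_mul_self _
  conv_rhs => rw [hA.1.spectral_theorem, Unitary.conjStarAlgAut_apply]
  unfold Matrix.PosSemidef.sqrt
  rw [show ∀ U D S : Matrix n n ℂ, U * D * S * (U * D * S) = U * (D * (S * U) * D) * S by
    intro U D S; simp only [Matrix.mul_assoc], hU, Matrix.mul_one, diagonal_mul_diagonal]
  have hf : (fun i => (Complex.ofReal ∘ Real.sqrt ∘ hA.1.eigenvalues) i *
      (Complex.ofReal ∘ Real.sqrt ∘ hA.1.eigenvalues) i) = (RCLike.ofReal ∘ hA.1.eigenvalues : n → ℂ) := by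
    funext i
    simp only [Function.comp_apply]
    rw [← Complex.ofReal_mul, Real.mul_self_sqrt (hA.eigenvalues_nonneg i)]
    rfl
  rw [hf]

lemma Matrix.PosSemidef.posSemidef_sqrt {n : Type*} [Fintype n] [DecidableEq n] {A : Matrix n n ℂ}
    (hA : A.PosSemidef) : hA.sqrt.PosSemidef := by
  have hD : (diagonal (((↑) : ℝ → ℂ) ∘ Real.sqrt ∘ hA.1.eigenvalues)).PosSemidef := by
    apply Matrix.PosSemidef.diagonal
    intro i
    simp only [Function.comp_apply, Pi.zero_apply]
    exact_mod_cast Real.sqrt_nonneg _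
  have := hD.mul_mul_conjTranspose_same (hA.1.eigenvectorUnitary.1)
  unfold Matrix.PosSemidef.sqrt
  rwa [← Matrix.star_eq_conjTranspose] at this

lemma trace_mul_conjTranspose_self {n m : Type*} [Fintype n] [Fintype m] (T : Matrix n m ℂ) :
    (T * Tᴴ).trace = ((∑ i, ∑ j, Complex.normSq (T i j) : ℝ) : ℂ) := by
  simp only [Matrix.trace, Matrix.diag, Matrix.mul_apply, Matrix.conjTranspose_apply]
  push_cast
  congr 1; ext i; congr 1; ext j
  exact (Complex.mul_conj _)


lemma psd_trace_re_nonneg {n : Type*} [Fintype n] [DecidableEq n] {X : Matrix n n ℂ}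
    (hX : X.PosSemidef) : 0 ≤ X.trace.re := by
  have h : ∀ i, 0 ≤ (X i i).re := by
    intro i
    have := hX.re_dotProduct_nonneg (Pi.single i 1)
    simpa [dotProduct, Matrix.mulVec, Pi.single_apply] using this
  have : X.trace.re = ∑ i, (X i i).re := by
    simp [Matrix.trace, Matrix.diag, Complex.re_sum]
  rw [this]
  exact Finset.sum_nonneg fun i _ => h i


lemma trace_mul_psd_re_nonneg {n : Type*} [Fintype n] [DecidableEq n] {X Y : Matrix n n ℂ}
    (hX : X.PosSemidef) (hY : Y.PosSemidef) : 0 ≤ ((X * Y).trace).re := by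
  have h1 : X = hX.sqrt * hX.sqrt := hX.sqrt_mul_self.symm
  have h2 : (X * Y).trace = (hX.sqrt * Y * hX.sqrt).trace := by
    conv_lhs => rw [h1]
    rw [Matrix.mul_assoc, Matrix.trace_mul_comm, Matrix.mul_assoc]
  rw [h2]
  have h3 : (hX.sqrt * Y * hX.sqrt).PosSemidef := by
    have := hY.mul_mul_conjTranspose_same hX.sqrt
    rwa [hX.posSemidef_sqrt.1.eq] at this
  exact psd_trace_re_nonneg h3


lemma frob_inner_eq {m n : Type*} [Fintype m] [Fintype n] (X Y : Matrix m n ℂ) :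
    (Xᴴ * Y).trace = ∑ p : m × n, (starRingEnd ℂ) (X p.1 p.2) * Y p.1 p.2 := by
  rw [Fintype.sum_prod_type]
  simp only [Matrix.trace, Matrix.diag, Matrix.mul_apply, Matrix.conjTranspose_apply]
  rw [Finset.sum_comm]
  rfl


lemma frob_sq_eq {m n : Type*} [Fintype m] [Fintype n] (X : Matrix m n ℂ) :
    (Xᴴ * X).trace.re = ∑ p : m × n, Complex.normSq (X p.1 p.2) := by
  rw [frob_inner_eq, Complex.re_sum]
  refine Finset.sum_congr rfl fun p _ => ?_
  rw [mul_comm, Complex.mul_conj]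
  simp


lemma frob_cs {m n : Type*} [Fintype m] [Fintype n] (X Y : Matrix m n ℂ) :
    ((Xᴴ * Y).trace).re ≤ Real.sqrt ((Xᴴ * X).trace.re) * Real.sqrt ((Yᴴ * Y).trace.re) := by
  classical
  let x : EuclideanSpace ℂ (m × n) := WithLp.toLp 2 (fun p : m × n => X p.1 p.2)
  let y : EuclideanSpace ℂ (m × n) := WithLp.toLp 2 (fun p : m × n => Y p.1 p.2)
  have hinner : (inner ℂ x y : ℂ) = (Xᴴ * Y).trace := by
    rw [frob_inner_eq]
    simp [PiLp.inner_apply, RCLike.inner_apply, x, y, mul_comm]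
  have hx : ‖x‖ = Real.sqrt ((Xᴴ * X).trace.re) := by
    rw [EuclideanSpace.norm_eq, frob_sq_eq]
    congr 1
    refine Finset.sum_congr rfl fun p _ => ?_
    rw [show x p = X p.1 p.2 from rfl, Complex.sq_norm]
  have hy : ‖y‖ = Real.sqrt ((Yᴴ * Y).trace.re) := by
    rw [EuclideanSpace.norm_eq, frob_sq_eq]
    congr 1
    refine Finset.sum_congr rfl fun p _ => ?_
    rw [show y p = Y p.1 p.2 from rfl, Complex.sq_norm]
  calc ((Xᴴ * Y).trace).re = (inner ℂ x y : ℂ).re := by rw [hinner]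
    _ ≤ ‖(inner ℂ x y : ℂ)‖ := Complex.re_le_norm _
    _ ≤ ‖x‖ * ‖y‖ := norm_inner_le_norm x y
    _ = _ := by rw [hx, hy]


lemma traceNorm_mul_le {n m : Type*} [Fintype n] [DecidableEq n] [Fintype m]
    (B : Matrix n m ℂ) (C : Matrix m n ℂ) :
    traceNorm (B * C) ≤ Real.sqrt ((Bᴴ * B).trace.re) * Real.sqrt ((Cᴴ * C).trace.re) := by
  classical
  set A : Matrix n n ℂ := B * C with hAdef
  have hA : (Aᴴ * A).PosSemidef := Matrix.posSemidef_conjTranspose_mul_self A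
  set H : Matrix n n ℂ := hA.sqrt with hHdef
  have hH : H.PosSemidef := hA.posSemidef_sqrt
  have hH2 : H * H = Aᴴ * A := hA.sqrt_mul_self
  set V : Matrix n n ℂ := (Matrix.IsHermitian.eigenvectorUnitary hH.1 : Matrix n n ℂ) with hVdef
  have hV1 : Vᴴ * V = 1 := by
    rw [← Matrix.star_eq_conjTranspose]
    exact Matrix.mem_unitaryGroup_iff'.mp (Matrix.IsHermitian.eigenvectorUnitary hH.1).2
  set lam : n → ℝ := hH.1.eigenvalues with hlamdef
  have hspec : H = V * Matrix.diagonal (fun i => (lam i : ℂ)) * Vᴴ := by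
    conv_lhs => rw [hH.1.spectral_theorem]
    rw [Unitary.conjStarAlgAut_apply, Matrix.star_eq_conjTranspose]
    rfl
  set g : n → ℂ := fun i => if lam i = 0 then 0 else (((lam i)⁻¹ : ℝ) : ℂ) with hgdef
  set Hp : Matrix n n ℂ := V * Matrix.diagonal g * Vᴴ with hHpdef
  have hprod : ∀ f f' : n → ℂ,
      (V * Matrix.diagonal f * Vᴴ) * (V * Matrix.diagonal f' * Vᴴ)
        = V * Matrix.diagonal (fun i => f i * f' i) * Vᴴ := by
    intro f f'
    have hmid : Vᴴ * (V * (Matrix.diagonal f' * Vᴴ)) = Matrix.diagonal f' * Vᴴ := by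
      rw [← Matrix.mul_assoc, hV1, Matrix.one_mul]
    simp only [Matrix.mul_assoc, hmid]
    rw [← Matrix.mul_assoc (Matrix.diagonal f), Matrix.diagonal_mul_diagonal]
  have hdiag : ∀ f f' : n → ℂ, (∀ i, f i = f' i) →
      V * Matrix.diagonal f * Vᴴ = V * Matrix.diagonal f' * Vᴴ := by
    intro f f' h
    rw [show f = f' from funext h]
  have hHp_herm : Hpᴴ = Hp := by
    have hg : star g = g := by
      funext i
      simp only [Pi.star_apply, hgdef]
      split <;> simp
    rw [hHpdef, Matrix.conjTranspose_mul, Matrix.conjTranspose_mul,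
      Matrix.conjTranspose_conjTranspose, Matrix.diagonal_conjTranspose, hg, Matrix.mul_assoc]
  have h2 : Hp * (H * H) = H := by
    rw [hspec, hHpdef, hprod, hprod]
    refine hdiag _ _ fun i => ?_
    by_cases h : lam i = 0
    · simp [hgdef, h]
    · have hc : ((lam i : ℝ) : ℂ) ≠ 0 := Complex.ofReal_ne_zero.mpr h
      simp only [hgdef, if_neg h]
      push_cast
      field_simp
  have h3 : (Hp * Hp) * ((H * H) * (Hp * Hp)) = Hp * Hp := by
    rw [hspec, hHpdef, hprod, hprod, hprod, hprod]
    refine hdiag _ _ fun i => ?_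
    by_cases h : lam i = 0
    · simp [hgdef, h]
    · have hc : ((lam i : ℝ) : ℂ) ≠ 0 := Complex.ofReal_ne_zero.mpr h
      simp only [hgdef, if_neg h]
      push_cast
      field_simp
  set X : Matrix m n ℂ := Bᴴ * (A * Hp) with hXdef
  have hXH : Xᴴ = Hp * (Aᴴ * B) := by
    rw [hXdef]
    simp only [Matrix.conjTranspose_mul, Matrix.conjTranspose_conjTranspose, hHp_herm,
      Matrix.mul_assoc]
  have htrH : (Xᴴ * C).trace = H.trace := by
    rw [hXH]
    have hstep : Hp * (Aᴴ * B) * C = Hp * (H * H) := by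
      rw [hH2]
      simp only [Matrix.mul_assoc]
      rfl
    rw [hstep, h2]
  set Q : Matrix n n ℂ := A * (Hp * Hp) * Aᴴ with hQdef
  have hQh : Qᴴ = Q := by
    rw [hQdef]
    simp only [Matrix.conjTranspose_mul, Matrix.conjTranspose_conjTranspose, hHp_herm,
      Matrix.mul_assoc]
  have hQQ : Q * Q = Q := by
    rw [hQdef]
    calc A * (Hp * Hp) * Aᴴ * (A * (Hp * Hp) * Aᴴ)
        = A * ((Hp * Hp) * ((Aᴴ * A) * (Hp * Hp))) * Aᴴ := by
          simp only [Matrix.mul_assoc]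
      _ = A * (Hp * Hp) * Aᴴ := by rw [← hH2, h3]
  have h1Q : (1 - Q).PosSemidef := by
    have heq : (1 - Q)ᴴ * (1 - Q) = 1 - Q := by
      rw [Matrix.conjTranspose_sub, Matrix.conjTranspose_one, hQh, Matrix.sub_mul,
        Matrix.mul_sub, Matrix.mul_sub, hQQ]
      simp only [Matrix.one_mul, Matrix.mul_one]
      abel
    have := Matrix.posSemidef_conjTranspose_mul_self (1 - Q)
    rwa [heq] at this
  have hXX : (Xᴴ * X).trace = ((B * Bᴴ) * Q).trace := by
    rw [hXH, hXdef, hQdef]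
    rw [show Hp * (Aᴴ * B) * (Bᴴ * (A * Hp)) = Hp * (Aᴴ * (B * (Bᴴ * (A * Hp)))) by
      simp only [Matrix.mul_assoc]]
    rw [Matrix.trace_mul_comm]
    rw [show Aᴴ * (B * (Bᴴ * (A * Hp))) * Hp = Aᴴ * (B * (Bᴴ * (A * (Hp * Hp)))) by
      simp only [Matrix.mul_assoc]]
    rw [Matrix.trace_mul_comm]
    simp only [Matrix.mul_assoc]
  have hXB : (Xᴴ * X).trace.re ≤ (Bᴴ * B).trace.re := by
    have hBB : (B * Bᴴ).PosSemidef := Matrix.posSemidef_self_mul_conjTranspose B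
    have hge := trace_mul_psd_re_nonneg hBB h1Q
    have hexp : ((B * Bᴴ) * (1 - Q)).trace = (B * Bᴴ).trace - ((B * Bᴴ) * Q).trace := by
      rw [Matrix.mul_sub, Matrix.mul_one, Matrix.trace_sub]
    rw [hexp, Complex.sub_re] at hge
    rw [hXX, Matrix.trace_mul_comm Bᴴ B]
    linarith
  have hTN : traceNorm (B * C) = H.trace.re := rfl
  rw [hTN, ← htrH]
  calc (Xᴴ * C).trace.re
      ≤ Real.sqrt ((Xᴴ * X).trace.re) * Real.sqrt ((Cᴴ * C).trace.re) := frob_cs X C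
    _ ≤ Real.sqrt ((Bᴴ * B).trace.re) * Real.sqrt ((Cᴴ * C).trace.re) := by
        apply mul_le_mul_of_nonneg_right (Real.sqrt_le_sqrt hXB) (Real.sqrt_nonneg _)


lemma trace_mul_herm_real {n : Type*} [Fintype n] {A B : Matrix n n ℂ}
    (hA : A.IsHermitian) (hB : B.IsHermitian) :
    (((A * B).trace.re : ℝ) : ℂ) = (A * B).trace := by
  apply Complex.conj_eq_iff_re.mp
  have h1 : (starRingEnd ℂ) ((A * B).trace) = ((A * B)ᴴ).trace := by
    rw [Matrix.trace_conjTranspose]; rfl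
  rw [h1, Matrix.conjTranspose_mul, hA.eq, hB.eq, Matrix.trace_mul_comm]


lemma trace_shift {n : Type*} [Fintype n] [DecidableEq n] (A B : Matrix n n ℂ) (c c' : ℂ) :
    ((A - c • 1) * (B - c' • 1)).trace
      = (A * B).trace - c' * A.trace - c * B.trace + c * c' * (Fintype.card n : ℂ) := by
  simp only [Matrix.sub_mul, Matrix.mul_sub, Matrix.smul_mul, Matrix.mul_smul,
    Matrix.trace_sub, Matrix.trace_smul, Matrix.one_mul, Matrix.mul_one, smul_smul,
    smul_eq_mul, Matrix.trace_one]
  ring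


lemma trace_sq_le_one {n : Type*} [Fintype n] [DecidableEq n] {σ : Matrix n n ℂ}
    (hσ : σ.PosSemidef) (h1 : σ.trace = 1) : ((σ * σ).trace).re ≤ 1 := by
  classical
  set V : Matrix n n ℂ := (Matrix.IsHermitian.eigenvectorUnitary hσ.1 : Matrix n n ℂ) with hVdef
  have hV1 : Vᴴ * V = 1 := by
    rw [← Matrix.star_eq_conjTranspose]
    exact Matrix.mem_unitaryGroup_iff'.mp (Matrix.IsHermitian.eigenvectorUnitary hσ.1).2
  set lam : n → ℝ := hσ.1.eigenvalues with hlamdef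
  have hspec : σ = V * Matrix.diagonal (fun i => (lam i : ℂ)) * Vᴴ := by
    conv_lhs => rw [hσ.1.spectral_theorem]
    rw [Unitary.conjStarAlgAut_apply, Matrix.star_eq_conjTranspose]
    rfl
  have htrdiag : ∀ f : n → ℂ, (V * Matrix.diagonal f * Vᴴ).trace = ∑ i, f i := by
    intro f
    rw [Matrix.trace_mul_comm, ← Matrix.mul_assoc, hV1, Matrix.one_mul, Matrix.trace_diagonal]
  have hprod : (V * Matrix.diagonal (fun i => (lam i : ℂ)) * Vᴴ)
      * (V * Matrix.diagonal (fun i => (lam i : ℂ)) * Vᴴ)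
      = V * Matrix.diagonal (fun i => ((lam i : ℂ) * (lam i : ℂ))) * Vᴴ := by
    have hmid : Vᴴ * (V * (Matrix.diagonal (fun i => (lam i : ℂ)) * Vᴴ))
        = Matrix.diagonal (fun i => (lam i : ℂ)) * Vᴴ := by
      rw [← Matrix.mul_assoc, hV1, Matrix.one_mul]
    simp only [Matrix.mul_assoc, hmid]
    rw [← Matrix.mul_assoc (Matrix.diagonal _), Matrix.diagonal_mul_diagonal]
  have hsum1 : ∑ i, lam i = 1 := by
    have := h1
    rw [hspec, htrdiag] at this
    have h2 : ((∑ i, lam i : ℝ) : ℂ) = 1 := by push_cast; exact this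
    exact_mod_cast h2
  have hsq : ((σ * σ).trace).re = ∑ i, (lam i) ^ 2 := by
    conv_lhs => rw [hspec]
    rw [hprod, htrdiag]
    push_cast
    rw [Complex.re_sum]
    refine Finset.sum_congr rfl fun i _ => ?_
    rw [← Complex.ofReal_mul]
    rw [Complex.ofReal_re, sq]
  rw [hsq, ← one_pow 2, ← hsum1]
  exact Finset.sum_sq_le_sq_sum_of_nonneg fun i _ => hσ.eigenvalues_nonneg i


lemma core_bound (d N M : ℕ) (x : ℝ) (E : Fin N → Fin M → Matrix (Fin d) (Fin d) ℂ)
    (hd : 2 < d) (hM : 2 ≤ M) (hPOVM : IsNMPOVM d N M x E)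
    (hx1 : (d : ℝ) / (M : ℝ) ^ 2 < x)
    (hIC : N * (M - 1) = d ^ 2 - 1)
    (σ : Matrix (Fin d) (Fin d) ℂ) (hσ : σ.PosSemidef) (hσ1 : σ.trace = 1) :
    ∑ q : Fin N × Fin M, Complex.normSq ((σ * E q.1 q.2).trace)
      ≤ ((d : ℝ) - 1) * (x * (M : ℝ) ^ 2 + (d : ℝ) ^ 2) /
        ((d : ℝ) * (M : ℝ) * ((M : ℝ) - 1)) := by
  classical
  obtain ⟨hpos, hsumE, htrE, hxx, hoff, hcross⟩ := hPOVM
  -- numeric facts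
  have hdR : (0 : ℝ) < d := by exact_mod_cast Nat.zero_lt_of_lt hd
  have hMR : (0 : ℝ) < M := by positivity
  have hM1R : (1 : ℝ) < M := by exact_mod_cast hM
  have hdC : (d : ℂ) ≠ 0 := Nat.cast_ne_zero.mpr (by omega)
  have hMC : (M : ℂ) ≠ 0 := Nat.cast_ne_zero.mpr (by omega)
  have hM1C : (M : ℂ) - 1 ≠ 0 := by
    intro h
    have : (M : ℂ) = 1 := by linear_combination h
    have : (M : ℕ) = 1 := by exact_mod_cast this
    omega
  -- real constants
  set aR : ℝ := x - (d : ℝ) / (M : ℝ) ^ 2 with haR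
  set bR : ℝ := -aR / ((M : ℝ) - 1) with hbR
  have haRpos : 0 < aR := by rw [haR]; linarith
  have hbRneg : bR ≤ 0 := by
    rw [hbR]
    apply div_nonpos_of_nonpos_of_nonneg <;> linarith
  set lamR : ℝ := aR - bR with hlamR
  have hlamRpos : 0 < lamR := by rw [hlamR]; linarith
  -- realness of traces
  have hrealz : ∀ q : Fin N × Fin M,
      ((((σ * E q.1 q.2).trace).re : ℝ) : ℂ) = (σ * E q.1 q.2).trace :=
    fun q => trace_mul_herm_real hσ.1 (hpos q.1 q.2).1
  set y : Fin N × Fin M → ℝ := fun q => ((σ * E q.1 q.2).trace).re - 1 / M with hy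
  have hzy : ∀ q : Fin N × Fin M,
      (σ * E q.1 q.2).trace = ((1 / (M : ℝ) + y q : ℝ) : ℂ) := by
    intro q
    rw [← hrealz q]
    congr 1
    simp only [hy]
    ring
  -- shifted matrices
  set Del : Matrix (Fin d) (Fin d) ℂ := σ - ((d : ℂ))⁻¹ • 1 with hDel
  set e : Fin N × Fin M → Matrix (Fin d) (Fin d) ℂ :=
    fun q => E q.1 q.2 - ((M : ℂ))⁻¹ • 1 with he
  have hDe : ∀ q : Fin N × Fin M, (Del * e q).trace = ((y q : ℝ) : ℂ) := by
    intro q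
    rw [hDel, he]
    rw [trace_shift]
    rw [hσ1, htrE q.1 q.2, hzy q, Fintype.card_fin]
    push_cast
    field_simp
    ring
  -- Gram values
  set c : Fin N × Fin M → Fin N × Fin M → ℝ := fun p q =>
    if p.1 = q.1 then (if p.2 = q.2 then aR else bR) else 0 with hc
  have hee : ∀ p q : Fin N × Fin M, (e p * e q).trace = ((c p q : ℝ) : ℂ) := by
    intro p q
    rw [he]
    rw [trace_shift]
    rw [htrE p.1 p.2, htrE q.1 q.2, Fintype.card_fin]
    by_cases h1 : p.1 = q.1
    · by_cases h2 : p.2 = q.2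
      · have hpq : p = q := Prod.ext h1 h2
        subst hpq
        rw [hxx p.1 p.2]
        simp only [hc, if_pos rfl, haR]
        push_cast
        field_simp
        ring
      · rw [h1, hoff q.1 p.2 q.2 h2]
        simp only [hc, if_pos h1, if_neg h2, hbR, haR]
        push_cast
        field_simp
        ring
    · rw [hcross p.1 q.1 p.2 q.2 h1]
      simp only [hc, if_neg h1]
      push_cast
      field_simp
      ring
  -- row sums of y vanish
  have hy0 : ∀ α : Fin N, ∑ k, y (α, k) = 0 := by
    intro α
    have hz : ∑ k, (σ * E α k).trace = 1 := by
      rw [← Matrix.trace_sum, ← Finset.mul_sum, hsumE α, Matrix.mul_one, hσ1]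
    have hzre : ∑ k, ((σ * E α k).trace).re = 1 := by
      rw [← Complex.re_sum, hz]
      simp
    have : ∑ k, y (α, k) = (∑ k, ((σ * E α k).trace).re) - M * (1 / M) := by
      rw [Finset.sum_sub_distrib]
      congr 1
      rw [Finset.sum_const, Finset.card_univ, Fintype.card_fin]
      simp [nsmul_eq_mul]
    rw [this, hzre]
    field_simp
    ring
  have hytot : ∑ q : Fin N × Fin M, y q = 0 := by
    rw [Fintype.sum_prod_type]
    exact Finset.sum_eq_zero fun α _ => hy0 α
  -- t and S
  set t : ℝ := ∑ q : Fin N × Fin M, (y q) ^ 2 with ht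
  have ht0 : 0 ≤ t := Finset.sum_nonneg fun q _ => sq_nonneg _
  set S : Matrix (Fin d) (Fin d) ℂ := ∑ q : Fin N × Fin M, ((y q : ℝ) : ℂ) • e q with hS
  have hDS : (Del * S).trace = ((t : ℝ) : ℂ) := by
    rw [hS, Finset.mul_sum, Matrix.trace_sum]
    simp only [Matrix.mul_smul, Matrix.trace_smul, hDe, smul_eq_mul]
    rw [ht]
    push_cast
    refine Finset.sum_congr rfl fun q _ => ?_
    ring
  -- inner Gram sum
  have hinner : ∀ p : Fin N × Fin M, ∑ q : Fin N × Fin M, y q * c p q = lamR * y p := by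
    intro p
    rw [Fintype.sum_prod_type]
    rw [Finset.sum_eq_single p.1]
    · have : ∀ l, y (p.1, l) * c p (p.1, l) = y (p.1, l) * bR
          + (if p.2 = l then (aR - bR) * y (p.1, l) else 0) := by
        intro l
        simp only [hc, if_pos rfl]
        by_cases h2 : p.2 = l
        · rw [if_pos h2, if_pos h2]; ring
        · rw [if_neg h2, if_neg h2]; ring
      rw [Finset.sum_congr rfl fun l _ => this l, Finset.sum_add_distrib]
      rw [← Finset.sum_mul, hy0 p.1, Finset.sum_ite_eq]
      simp only [Finset.mem_univ, if_pos]
      rw [hlamR]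
      ring
    · intro β _ hβ
      apply Finset.sum_eq_zero
      intro l _
      simp only [hc, if_neg (fun h : p.1 = β => hβ h.symm)]
      ring
    · intro h
      exact absurd (Finset.mem_univ p.1) h
  have heS : ∀ p : Fin N × Fin M, (e p * S).trace = ((lamR * y p : ℝ) : ℂ) := by
    intro p
    rw [hS, Finset.mul_sum, Matrix.trace_sum]
    simp only [Matrix.mul_smul, Matrix.trace_smul, hee, smul_eq_mul]
    rw [← hinner p]
    push_cast
    refine Finset.sum_congr rfl fun q _ => ?_
    ring
  have hSS : (S * S).trace = ((lamR * t : ℝ) : ℂ) := by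
    rw [hS, Finset.sum_mul, Matrix.trace_sum]
    simp only [Matrix.smul_mul, Matrix.trace_smul, smul_eq_mul]
    have : ∀ q : Fin N × Fin M, (↑(y q) : ℂ) * (e q * S).trace = ((y q * (lamR * y q) : ℝ) : ℂ) := by
      intro q
      rw [heS q]
      push_cast
      ring
    rw [Finset.sum_congr rfl fun q _ => this q]
    rw [ht]
    push_cast
    rw [Finset.mul_sum]
    refine Finset.sum_congr rfl fun q _ => ?_
    ring
  -- Hermitian structure
  have hDelH : Delᴴ = Del := by
    rw [hDel, Matrix.conjTranspose_sub, hσ.1.eq, Matrix.conjTranspose_smul,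
      Matrix.conjTranspose_one]
    congr 1
    simp
  have heH : ∀ q, (e q)ᴴ = e q := by
    intro q
    rw [he, Matrix.conjTranspose_sub, (hpos q.1 q.2).1.eq, Matrix.conjTranspose_smul,
      Matrix.conjTranspose_one]
    congr 1
    simp
  have hSH : Sᴴ = S := by
    rw [hS, Matrix.conjTranspose_sum]
    refine Finset.sum_congr rfl fun q _ => ?_
    rw [Matrix.conjTranspose_smul, heH q]
    congr 1
    exact Complex.conj_ofReal _
  -- Delta squared trace
  have hs2 : (((σ * σ).trace.re : ℝ) : ℂ) = (σ * σ).trace := trace_mul_herm_real hσ.1 hσ.1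
  set s2 : ℝ := ((σ * σ).trace).re with hs2def
  have hDD : (Del * Del).trace = ((s2 - 1 / d : ℝ) : ℂ) := by
    rw [hDel, trace_shift, hσ1, Fintype.card_fin, ← hs2]
    push_cast
    field_simp
    ring
  -- positivity
  set T : Matrix (Fin d) (Fin d) ℂ := ((lamR : ℝ) : ℂ) • Del - S with hT
  have hTH : Tᴴ = T := by
    rw [hT, Matrix.conjTranspose_sub, Matrix.conjTranspose_smul, hDelH, hSH]
    congr 1
    rw [Complex.star_def, Complex.conj_ofReal]
  have hTT : (T * T).trace = ((lamR ^ 2 * (s2 - 1 / d) - lamR * t : ℝ) : ℂ) := by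
    have hexp : T * T = ((((lamR : ℝ) : ℂ) * ((lamR : ℝ) : ℂ)) • (Del * Del))
        - (((lamR : ℝ) : ℂ) • (Del * S)) - (((lamR : ℝ) : ℂ) • (S * Del)) + S * S := by
      rw [hT, Matrix.sub_mul, Matrix.mul_sub, Matrix.mul_sub, smul_mul_assoc, smul_mul_assoc,
        mul_smul_comm, mul_smul_comm, smul_smul]
      abel
    rw [hexp, Matrix.trace_add, Matrix.trace_sub, Matrix.trace_sub, Matrix.trace_smul,
      Matrix.trace_smul, Matrix.trace_smul, Matrix.trace_mul_comm S Del, hDS, hDD, hSS]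
    simp only [smul_eq_mul]
    push_cast
    ring
  have hTpos : 0 ≤ ((T * T).trace).re := by
    have h := trace_mul_conjTranspose_self T
    rw [hTH] at h
    rw [h]
    rw [Complex.ofReal_re]
    apply Finset.sum_nonneg
    intro i _
    apply Finset.sum_nonneg
    intro j _
    exact Complex.normSq_nonneg _
  have hkey : t ≤ lamR * (s2 - 1 / d) := by
    rw [hTT, Complex.ofReal_re] at hTpos
    nlinarith [hlamRpos]
  have hs2le : s2 ≤ 1 := trace_sq_le_one hσ hσ1
  have htle : t ≤ lamR * (1 - 1 / d) := by
    have : lamR * (s2 - 1 / d) ≤ lamR * (1 - 1 / d) := by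
      apply mul_le_mul_of_nonneg_left _ (le_of_lt hlamRpos)
      linarith
    linarith
  -- final sum
  have hsumfinal : ∑ q : Fin N × Fin M, Complex.normSq ((σ * E q.1 q.2).trace)
      = (N : ℝ) / M + t := by
    have h1 : ∀ q : Fin N × Fin M, Complex.normSq ((σ * E q.1 q.2).trace)
        = 1 / (M : ℝ) ^ 2 + 2 / M * y q + y q ^ 2 := by
      intro q
      rw [hzy q, Complex.normSq_ofReal]
      ring
    rw [Finset.sum_congr rfl fun q _ => h1 q]
    rw [Finset.sum_add_distrib, Finset.sum_add_distrib]
    rw [← Finset.mul_sum, hytot, mul_zero]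
    rw [Finset.sum_const, Finset.card_univ]
    have hcard : Fintype.card (Fin N × Fin M) = N * M := by
      rw [Fintype.card_prod, Fintype.card_fin, Fintype.card_fin]
    rw [hcard, nsmul_eq_mul, ← ht]
    have : ((N * M : ℕ) : ℝ) * (1 / (M : ℝ) ^ 2) = (N : ℝ) / M := by
      push_cast
      field_simp
    rw [this, add_zero]
  -- cast of hIC
  have hICr : (N : ℝ) * ((M : ℝ) - 1) = (d : ℝ) ^ 2 - 1 := by
    have h1 : (N * (M - 1) : ℕ) = ((d ^ 2 - 1 : ℕ)) := hIC
    have h2 : ((N * (M - 1) : ℕ) : ℝ) = ((d ^ 2 - 1 : ℕ) : ℝ) := by exact_mod_cast h1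
    rw [Nat.cast_mul, Nat.cast_sub (by omega : 1 ≤ M), Nat.cast_sub (by nlinarith : 1 ≤ d ^ 2)]
      at h2
    push_cast at h2
    linarith
  -- final arithmetic
  rw [hsumfinal]
  have hfinal : (N : ℝ) / M + lamR * (1 - 1 / d)
      = ((d : ℝ) - 1) * (x * (M : ℝ) ^ 2 + (d : ℝ) ^ 2) /
        ((d : ℝ) * (M : ℝ) * ((M : ℝ) - 1)) := by
    have hM1 : (M : ℝ) - 1 ≠ 0 := by linarith
    have hMne : (M : ℝ) ≠ 0 := by linarith
    have hdne : (d : ℝ) ≠ 0 := by linarith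
    have hN : (N : ℝ) = ((d : ℝ) ^ 2 - 1) / ((M : ℝ) - 1) := by
      rw [eq_div_iff hM1]
      exact hICr
    rw [hlamR, hbR, haR, hN]
    field_simp
    ring
  linarith [htle]


theorem separable_trace_norm_bound (d N M : ℕ) (x : ℝ)
    (E : Fin N → Fin M → Matrix (Fin d) (Fin d) ℂ)
    (hd : 2 < d) (hM : 2 ≤ M)
    (hPOVM : IsNMPOVM d N M x E)
    (hx : (d : ℝ) / (M : ℝ) ^ 2 < x ∧
      x ≤ min ((d : ℝ) ^ 2 / (M : ℝ) ^ 2) ((d : ℝ) / (M : ℝ)))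
    (hIC : N * (M - 1) = d ^ 2 - 1)
    (ρ : Matrix (Fin d × Fin d) (Fin d × Fin d) ℂ)
    (hsep : ∃ (k : ℕ) (p : Fin k → ℝ) (σ τ : Fin k → Matrix (Fin d) (Fin d) ℂ),
      (∀ i, 0 ≤ p i) ∧ (∑ i, p i = 1) ∧
      (∀ i, (σ i).PosSemidef ∧ (σ i).trace = 1) ∧
      (∀ i, (τ i).PosSemidef ∧ (τ i).trace = 1) ∧
      ρ = ∑ i, (p i : ℂ) • ((σ i) ⊗ₖ (τ i)))
    (P : Matrix (Fin N × Fin M) (Fin N × Fin M) ℂ)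
    (hP : ∀ p q, P p q = (ρ * ((E p.1 p.2) ⊗ₖ (E q.1 q.2))).trace) :
    traceNorm P
      ≤ ((d : ℝ) - 1) * (x * (M : ℝ) ^ 2 + (d : ℝ) ^ 2) /
        ((d : ℝ) * (M : ℝ) * ((M : ℝ) - 1)) := by
  classical
  obtain ⟨k, p, σ, τ, hp0, hp1, hσ, hτ, hρ⟩ := hsep
  set B0 : ℝ := ((d : ℝ) - 1) * (x * (M : ℝ) ^ 2 + (d : ℝ) ^ 2) /
      ((d : ℝ) * (M : ℝ) * ((M : ℝ) - 1)) with hB0def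
  have hdR : (0 : ℝ) < d := by exact_mod_cast Nat.zero_lt_of_lt hd
  have hM1R : (1 : ℝ) < M := by exact_mod_cast hM
  have hMR : (0 : ℝ) < M := by linarith
  have hxpos : 0 < x := lt_trans (by positivity) hx.1
  have hd2R : (2 : ℝ) < d := by exact_mod_cast hd
  have hB0 : 0 ≤ B0 := by
    rw [hB0def]
    apply div_nonneg
    · exact mul_nonneg (by linarith)
        (add_nonneg (mul_nonneg hxpos.le (sq_nonneg _)) (sq_nonneg _))
    · exact mul_nonneg (mul_nonneg hdR.le hMR.le) (by linarith)
  set Bm : Matrix (Fin N × Fin M) (Fin k) ℂ :=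
    Matrix.of (fun q i => ((Real.sqrt (p i) : ℝ) : ℂ) * ((σ i * E q.1 q.2).trace)) with hBm
  set Cm : Matrix (Fin k) (Fin N × Fin M) ℂ :=
    Matrix.of (fun i q => ((Real.sqrt (p i) : ℝ) : ℂ) * ((τ i * E q.1 q.2).trace)) with hCm
  have hPBC : P = Bm * Cm := by
    ext q r
    rw [hP q r, hρ, Matrix.sum_mul, Matrix.trace_sum]
    rw [Matrix.mul_apply]
    refine Finset.sum_congr rfl fun i _ => ?_
    rw [Matrix.smul_mul, Matrix.trace_smul, ← Matrix.mul_kronecker_mul,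
      Matrix.trace_kronecker]
    simp only [hBm, hCm, Matrix.of_apply, smul_eq_mul]
    have hre : ((Real.sqrt (p i) : ℝ) : ℂ) * ((Real.sqrt (p i) : ℝ) : ℂ) = ((p i : ℝ) : ℂ) := by
      rw [← Complex.ofReal_mul, Real.mul_self_sqrt (hp0 i)]
    rw [← hre]
    ring
  have hcore_b : (Bmᴴ * Bm).trace.re ≤ B0 := by
    rw [frob_sq_eq]
    have hterm : ∀ pr : (Fin N × Fin M) × Fin k,
        Complex.normSq (Bm pr.1 pr.2)
          = p pr.2 * Complex.normSq ((σ pr.2 * E pr.1.1 pr.1.2).trace) := by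
      intro pr
      simp only [hBm, Matrix.of_apply]
      rw [Complex.normSq_mul, Complex.normSq_ofReal, Real.mul_self_sqrt (hp0 pr.2)]
    rw [Finset.sum_congr rfl fun pr _ => hterm pr]
    rw [Fintype.sum_prod_type]
    rw [Finset.sum_comm]
    calc ∑ i : Fin k, ∑ q : Fin N × Fin M, p i * Complex.normSq ((σ i * E q.1 q.2).trace)
        ≤ ∑ i : Fin k, p i * B0 := by
          apply Finset.sum_le_sum
          intro i _
          rw [← Finset.mul_sum]
          exact mul_le_mul_of_nonneg_left
            (core_bound d N M x E hd hM ⟨hPOVM.1, hPOVM.2.1, hPOVM.2.2.1, hPOVM.2.2.2.1,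
              hPOVM.2.2.2.2.1, hPOVM.2.2.2.2.2⟩ hx.1 hIC (σ i) (hσ i).1 (hσ i).2) (hp0 i)
      _ = B0 := by rw [← Finset.sum_mul, hp1, one_mul]
  have hcore_c : (Cmᴴ * Cm).trace.re ≤ B0 := by
    rw [frob_sq_eq]
    have hterm : ∀ pr : Fin k × (Fin N × Fin M),
        Complex.normSq (Cm pr.1 pr.2)
          = p pr.1 * Complex.normSq ((τ pr.1 * E pr.2.1 pr.2.2).trace) := by
      intro pr
      simp only [hCm, Matrix.of_apply]
      rw [Complex.normSq_mul, Complex.normSq_ofReal, Real.mul_self_sqrt (hp0 pr.1)]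
    rw [Finset.sum_congr rfl fun pr _ => hterm pr]
    rw [Fintype.sum_prod_type]
    calc ∑ i : Fin k, ∑ q : Fin N × Fin M, p i * Complex.normSq ((τ i * E q.1 q.2).trace)
        ≤ ∑ i : Fin k, p i * B0 := by
          apply Finset.sum_le_sum
          intro i _
          rw [← Finset.mul_sum]
          exact mul_le_mul_of_nonneg_left
            (core_bound d N M x E hd hM ⟨hPOVM.1, hPOVM.2.1, hPOVM.2.2.1, hPOVM.2.2.2.1,
              hPOVM.2.2.2.2.1, hPOVM.2.2.2.2.2⟩ hx.1 hIC (τ i) (hτ i).1 (hτ i).2) (hp0 i)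
      _ = B0 := by rw [← Finset.sum_mul, hp1, one_mul]
  calc traceNorm P = traceNorm (Bm * Cm) := by rw [hPBC]
    _ ≤ Real.sqrt ((Bmᴴ * Bm).trace.re) * Real.sqrt ((Cmᴴ * Cm).trace.re) :=
        traceNorm_mul_le Bm Cm
    _ ≤ Real.sqrt B0 * Real.sqrt B0 := by
        apply mul_le_mul (Real.sqrt_le_sqrt hcore_b) (Real.sqrt_le_sqrt hcore_c)
          (Real.sqrt_nonneg _) (Real.sqrt_nonneg _)
    _ = B0 := Real.mul_self_sqrt hB0
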